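/- arXiv:2404.13382 — 2 statements merged into one kernel-verified Lean document; each statement's English description precedes it below -/
import Mathlib

section
/- Let $F : \mathbb{R}^n \to \mathbb{R}$ be differentiable with $L$-Lipschitz gradient, let $x \in \mathbb{R}^n$, $g \in \mathbb{R}^n$, $\alpha > 0$, $0 < \gamma_2 < \gamma_1$, and set $p = -\gamma_2 \alpha g$ and $x^+ = x + p$. Then $F(x^+) \le F(x) - \tfrac{1}{2}\alpha\gamma_2\|g\|^2 + \alpha \frac{\gamma_1^2}{2\gamma_2}\|\nabla F(x) - g\|^2 + \tfrac{1}{2}\alpha^2\gamma_1^2 L \|g\|^2$. -/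
/-!
Along the segment `t ↦ x + t • p`, the Lipschitz bound on the gradient shows that
`F (x + t • p) - t ⟪∇F x, p⟫ - K t² ‖p‖² / 2` is antitone, which is the descent lemma.
For the step `p = -t g`, polarization gives
`-⟪∇F x, g⟫ ≤ (‖∇F x - g‖² - ‖g‖²) / 2`, and `γ₂ < γ₁` lets one enlarge the
coefficients of the error and curvature terms.
-/

open scoped NNReal RealInnerProductSpace

theorem LipschitzWith.inner_sub_add_smul_le {E : Type*} [NormedAddCommGroup E]
    [InnerProductSpace ℝ E] {G : E → E} {K : ℝ≥0} (hG : LipschitzWith K G) (x p : E) {t : ℝ}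
    (ht : 0 ≤ t) : ⟪G (x + t • p) - G x, p⟫ ≤ K * t * ‖p‖ ^ 2 :=
  calc ⟪G (x + t • p) - G x, p⟫ ≤ ‖G (x + t • p) - G x‖ * ‖p‖ := real_inner_le_norm _ _
    _ ≤ K * ‖t • p‖ * ‖p‖ := by
        gcongr
        simpa [dist_eq_norm] using hG.dist_le_mul (x + t • p) x
    _ = K * t * ‖p‖ ^ 2 := by rw [norm_smul, Real.norm_of_nonneg ht]; ring

section

variable {E : Type*} [NormedAddCommGroup E] [InnerProductSpace ℝ E] [CompleteSpace E]
  {F : E → ℝ} {F' : E → E} {K : ℝ≥0}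

theorem HasGradientAt.hasDerivAt_comp_add_smul {f : E → ℝ} {f' x p : E} {t : ℝ}
    (h : HasGradientAt f f' (x + t • p)) :
    HasDerivAt (fun s : ℝ => f (x + s • p)) ⟪f', p⟫ t := by
  have hline : HasDerivAt (fun s : ℝ => x + s • p) p t := by
    simpa using ((hasDerivAt_id t).smul_const p).const_add x
  exact h.hasFDerivAt.comp_hasDerivAt t hline

theorem le_add_inner_add_sq_of_lipschitzWith_gradient (hF : ∀ x, HasGradientAt F (F' x) x)
    (hF' : LipschitzWith K F') (x p : E) :
    F (x + p) ≤ F x + ⟪F' x, p⟫ + K / 2 * ‖p‖ ^ 2 := by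
  set φ : ℝ → ℝ := fun t => F (x + t • p) - t * ⟪F' x, p⟫ - K / 2 * t ^ 2 * ‖p‖ ^ 2
  have hφ : ∀ t, HasDerivAt φ (⟪F' (x + t • p), p⟫ - ⟪F' x, p⟫ - K * t * ‖p‖ ^ 2) t := by
    intro t
    have hquad := ((hasDerivAt_pow 2 t).const_mul ((K : ℝ) / 2)).mul_const (‖p‖ ^ 2)
    refine (((hF _).hasDerivAt_comp_add_smul.sub
      ((hasDerivAt_id t).mul_const ⟪F' x, p⟫)).sub hquad).congr_deriv ?_
    ring
  have hanti : AntitoneOn φ (Set.Ici 0) := by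
    refine antitoneOn_of_hasDerivWithinAt_nonpos (convex_Ici 0)
      (HasDerivAt.continuousOn fun t _ => hφ t) (fun t _ => (hφ t).hasDerivWithinAt)
      fun t ht => ?_
    rw [interior_Ici] at ht
    have := hF'.inner_sub_add_smul_le x p (le_of_lt ht)
    rw [inner_sub_left] at this
    linarith
  have h01 := hanti Set.self_mem_Ici (zero_le_one' ℝ) zero_le_one
  simp only [φ, zero_smul, one_smul, add_zero] at h01
  linarith

theorem le_of_gradient_step (hF : ∀ x, HasGradientAt F (F' x) x) (hF' : LipschitzWith K F')
    (x g : E) {t : ℝ} (ht : 0 ≤ t) :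
    F (x + (-t) • g) ≤
      F x - t / 2 * ‖g‖ ^ 2 + t / 2 * ‖F' x - g‖ ^ 2 + K / 2 * t ^ 2 * ‖g‖ ^ 2 := by
  have hdescent := le_add_inner_add_sq_of_lipschitzWith_gradient hF hF' x ((-t) • g)
  have hpolar := norm_sub_sq_real (F' x) g
  have hinner : ⟪F' x, (-t) • g⟫ ≤ -(t / 2) * ‖g‖ ^ 2 + t / 2 * ‖F' x - g‖ ^ 2 := by
    rw [real_inner_smul_right]
    nlinarith [sq_nonneg ‖F' x‖]
  rw [norm_smul, mul_pow, Real.norm_eq_abs, sq_abs, neg_sq] at hdescent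
  linarith

end

theorem stmt_6 {n : ℕ} (F : EuclideanSpace ℝ (Fin n) → ℝ)
    (F' : EuclideanSpace ℝ (Fin n) → EuclideanSpace ℝ (Fin n)) (L : ℝ) (hL : 0 < L)
    (hgrad : ∀ x, HasGradientAt F (F' x) x)
    (hlip : LipschitzWith (Real.toNNReal L) F')
    (x g : EuclideanSpace ℝ (Fin n)) (α γ₁ γ₂ : ℝ)
    (hα : 0 < α) (hγ₂ : 0 < γ₂) (hγ : γ₂ < γ₁) :
    F (x + (-(γ₂ * α)) • g) ≤
      F x - (1 / 2) * α * γ₂ * ‖g‖ ^ 2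
        + α * (γ₁ ^ 2 / (2 * γ₂)) * ‖F' x - g‖ ^ 2
        + (1 / 2) * α ^ 2 * γ₁ ^ 2 * L * ‖g‖ ^ 2 := by
  have hstep := le_of_gradient_step hgrad hlip x g (mul_pos hγ₂ hα).le
  rw [Real.coe_toNNReal L hL.le] at hstep
  have hsq : γ₂ ^ 2 ≤ γ₁ ^ 2 := pow_le_pow_left₀ hγ₂.le hγ.le 2
  have herr : γ₂ * α / 2 ≤ α * (γ₁ ^ 2 / (2 * γ₂)) := by
    rw [mul_div_assoc', le_div_iff₀ (by positivity)]
    nlinarith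
  have hcurv : L / 2 * (γ₂ * α) ^ 2 ≤ 1 / 2 * α ^ 2 * γ₁ ^ 2 * L := by
    nlinarith [mul_le_mul_of_nonneg_left hsq (mul_nonneg hL.le (sq_nonneg α))]
  nlinarith [mul_le_mul_of_nonneg_right herr (sq_nonneg ‖F' x - g‖),
    mul_le_mul_of_nonneg_right hcurv (sq_nonneg ‖g‖)]
end

section
/- Let $F : \mathbb{R}^n \to \mathbb{R}$ be differentiable with $L$-Lipschitz gradient and bounded below by $F_*$. Let $0 < \gamma_2 < \gamma_1$, $\alpha < \frac{\gamma_2}{2\gamma_1^2 L}$, and let $(x_k)$ be TRish iterates with stochastic gradients satisfying $\mathbb{E}_k[g_k] = \nabla F(x_k)$ and $\mathbb{E}_k[\|\nabla F(x_k) - g_k\|^2] < M_g$. Then with $\beta = \frac{\gamma_1^2 - \gamma_2^2}{2\gamma_2} + \tfrac{1}{2}\alpha\gamma_1^2 L$, for every $K \ge 1$: $\mathbb{E}\left[\frac{1}{K}\sum_{k=1}^K \|\nabla F(x_k)\|^2\right] \le \frac{4(F(x_1) - F_*)}{K\alpha\gamma_2} + \frac{4\beta M_g}{\gamma_2}$.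 -/
/-!
Each TRish step is a gradient step `-(c α) g` with a random factor `c ∈ [γ₂, γ₁]`. The descent
lemma for `L`-smooth `F`, together with Young's inequality to absorb the part `c - γ₂` of the factor
(whose correlation with `g` is uncontrolled), bounds `F (x (k+1))` by `F (x k)` plus multiples of
`⟪∇F, g⟫`, `‖∇F‖²` and `‖∇F - g‖²`. In expectation, unbiasedness turns `⟪∇F, g⟫` into `‖∇F‖²`,
the step-size condition makes the resulting coefficient of `E ‖∇F‖²` at most `-α γ₂ / 4`, and
summing the per-step decrease telescopes.
-/

open MeasureTheory RealInnerProductSpace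

section Smooth

variable {E : Type*} [NormedAddCommGroup E] [InnerProductSpace ℝ E] [CompleteSpace E]

theorem apply_add_le_of_lipschitzWith_gradient {F : E → ℝ} {F' : E → E} {K : NNReal}
    (hgrad : ∀ y, HasGradientAt F (F' y) y) (hlip : LipschitzWith K F') (x v : E) :
    F (x + v) ≤ F x + ⟪F' x, v⟫ + K / 2 * ‖v‖ ^ 2 := by
  have hline : ∀ t : ℝ, HasDerivAt (fun s : ℝ => F (x + s • v)) ⟪F' (x + t • v), v⟫ t := by
    intro t
    have hcurve : HasDerivAt (fun s : ℝ => x + s • v) v t := by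
      simpa using ((hasDerivAt_id t).smul_const v).const_add x
    have := (hgrad (x + t • v)).hasFDerivAt.comp_hasDerivAt t hcurve
    simp only [InnerProductSpace.toDual_apply_apply] at this
    exact this
  have hbound : ∀ t : ℝ, HasDerivAt (fun s : ℝ => F x + s * ⟪F' x, v⟫ + K / 2 * ‖v‖ ^ 2 * s ^ 2)
      (⟪F' x, v⟫ + K * ‖v‖ ^ 2 * t) t := by
    intro t
    refine ((((hasDerivAt_id t).mul_const ⟪F' x, v⟫).const_add (F x)).add
      ((hasDerivAt_pow 2 t).const_mul (K / 2 * ‖v‖ ^ 2))).congr_deriv ?_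
    norm_num; ring
  have hderiv_le : ∀ t ∈ Set.Ico (0 : ℝ) 1, ⟪F' (x + t • v), v⟫ ≤ ⟪F' x, v⟫ + K * ‖v‖ ^ 2 * t := by
    rintro t ⟨ht, -⟩
    have hdist : ‖F' (x + t • v) - F' x‖ ≤ K * (t * ‖v‖) := by
      simpa [← dist_eq_norm, norm_smul, abs_of_nonneg ht] using hlip.dist_le_mul (x + t • v) x
    calc ⟪F' (x + t • v), v⟫ = ⟪F' x, v⟫ + ⟪F' (x + t • v) - F' x, v⟫ := by
          rw [inner_sub_left]; ring
      _ ≤ ⟪F' x, v⟫ + ‖F' (x + t • v) - F' x‖ * ‖v‖ := by gcongr; exact real_inner_le_norm _ _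
      _ ≤ ⟪F' x, v⟫ + K * (t * ‖v‖) * ‖v‖ := by gcongr
      _ = ⟪F' x, v⟫ + K * ‖v‖ ^ 2 * t := by ring
  have key := image_le_of_deriv_right_le_deriv_boundary
    (fun t _ => (hline t).continuousAt.continuousWithinAt)
    (fun t _ => (hline t).hasDerivWithinAt) (le_of_eq (by simp))
    (fun t _ => (hbound t).continuousAt.continuousWithinAt)
    (fun t _ => (hbound t).hasDerivWithinAt) hderiv_le (Set.right_mem_Icc.2 zero_le_one)
  simpa using key

end Smooth

section Trish

variable {E : Type*} [NormedAddCommGroup E] [InnerProductSpace ℝ E]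

noncomputable def trishStep (γ₁ γ₂ α : ℝ) (g : E) : E :=
  if ‖g‖ < 1 / γ₁ then (-(γ₁ * α)) • g
  else if ‖g‖ ≤ 1 / γ₂ then (-(α / ‖g‖)) • g
  else (-(γ₂ * α)) • g

theorem exists_trishStep_eq_smul {γ₁ γ₂ : ℝ} (hγ₂ : 0 < γ₂) (hγ : γ₂ ≤ γ₁) (α : ℝ) (g : E) :
    ∃ c ∈ Set.Icc γ₂ γ₁, trishStep γ₁ γ₂ α g = (-(c * α)) • g := by
  unfold trishStep
  split_ifs with hsmall hmid
  · exact ⟨γ₁, ⟨hγ, le_rfl⟩, rfl⟩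
  · have hγ₁ : 0 < γ₁ := hγ₂.trans_le hγ
    have hg : 1 / γ₁ ≤ ‖g‖ := not_lt.1 hsmall
    have hg0 : 0 < ‖g‖ := (one_div_pos.2 hγ₁).trans_le hg
    refine ⟨1 / ‖g‖, ⟨?_, ?_⟩, by rw [one_div_mul_eq_div]⟩
    · rwa [le_one_div hγ₂ hg0]
    · rwa [one_div_le hg0 hγ₁]
  · exact ⟨γ₂, ⟨le_rfl, hγ⟩, rfl⟩

theorem neg_mul_inner_add_sq_le {L α γ₁ γ₂ c : ℝ} (hL : 0 ≤ L) (hα : 0 ≤ α) (hγ₂ : 0 < γ₂)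
    (hc : c ∈ Set.Icc γ₂ γ₁) (h g : E) :
    -(c * α) * ⟪h, g⟫ + L / 2 * ((c * α) ^ 2 * ‖g‖ ^ 2) ≤
      (L * α ^ 2 * γ₁ ^ 2 - α * γ₂) * ⟪h, g⟫
        + (α * (γ₁ - γ₂) * γ₂ / (2 * (γ₁ + γ₂)) - L * α ^ 2 * γ₁ ^ 2 / 2) * ‖h‖ ^ 2
        + α * ((γ₁ ^ 2 - γ₂ ^ 2) / (2 * γ₂) + 1 / 2 * α * γ₁ ^ 2 * L) * ‖h - g‖ ^ 2 := by
  obtain ⟨hc₂, hc₁⟩ := hc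
  have hγ₁ : 0 < γ₁ := hγ₂.trans_le (hc₂.trans hc₁)
  have hnorm_g : ‖g‖ ^ 2 = 2 * ⟪h, g⟫ - ‖h‖ ^ 2 + ‖h - g‖ ^ 2 := by
    rw [norm_sub_sq_real]; ring
  have hinner : -(‖h‖ * ‖h - g‖) ≤ ⟪h, g⟫ := by
    have h1 : ⟪h, g⟫ = ‖h‖ ^ 2 - ⟪h, h - g⟫ := by
      rw [inner_sub_right, real_inner_self_eq_norm_sq]; ring
    nlinarith [real_inner_le_norm h (h - g), sq_nonneg ‖h‖]
  have hamgm : (γ₁ - γ₂) * (‖h‖ * ‖h - g‖) ≤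
      (γ₁ - γ₂) * γ₂ / (2 * (γ₁ + γ₂)) * ‖h‖ ^ 2
        + (γ₁ ^ 2 - γ₂ ^ 2) / (2 * γ₂) * ‖h - g‖ ^ 2 := by
    have hsq : 2 * (γ₂ * (γ₁ + γ₂)) * (‖h‖ * ‖h - g‖) ≤
        γ₂ ^ 2 * ‖h‖ ^ 2 + (γ₁ + γ₂) ^ 2 * ‖h - g‖ ^ 2 := by
      nlinarith [sq_nonneg (γ₂ * ‖h‖ - (γ₁ + γ₂) * ‖h - g‖)]
    have hpos : 0 < 2 * (γ₂ * (γ₁ + γ₂)) := by positivity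
    calc (γ₁ - γ₂) * (‖h‖ * ‖h - g‖)
        ≤ (γ₁ - γ₂) / (2 * (γ₂ * (γ₁ + γ₂))) *
            (γ₂ ^ 2 * ‖h‖ ^ 2 + (γ₁ + γ₂) ^ 2 * ‖h - g‖ ^ 2) := by
          rw [div_mul_eq_mul_div, le_div_iff₀ hpos]
          nlinarith [mul_le_mul_of_nonneg_left hsq (sub_nonneg.2 (hc₂.trans hc₁))]
      _ = _ := by field_simp; ring
  have hcα : 0 ≤ (c - γ₂) * α := mul_nonneg (sub_nonneg.2 hc₂) hα
  have hlinear : -(c * α) * ⟪h, g⟫ ≤ -(α * γ₂) * ⟪h, g⟫ + α * ((γ₁ - γ₂) * (‖h‖ * ‖h - g‖)) := by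
    linear_combination mul_le_mul_of_nonneg_left hinner hcα
      + mul_le_mul_of_nonneg_right hc₁ (by positivity : 0 ≤ α * (‖h‖ * ‖h - g‖))
  have hquad : L / 2 * ((c * α) ^ 2 * ‖g‖ ^ 2) ≤ L / 2 * ((γ₁ * α) ^ 2 * ‖g‖ ^ 2) := by
    gcongr
    exact mul_nonneg (hγ₂.le.trans hc₂) hα
  linear_combination hlinear + hquad + mul_le_mul_of_nonneg_left hamgm hα
    + L / 2 * (γ₁ * α) ^ 2 * hnorm_g

theorem apply_add_trishStep_le {F : E → ℝ} {F' : E → E} {L α γ₁ γ₂ : ℝ}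
    (hdesc : ∀ x v, F (x + v) ≤ F x + ⟪F' x, v⟫ + L / 2 * ‖v‖ ^ 2)
    (hL : 0 ≤ L) (hα : 0 ≤ α) (hγ₂ : 0 < γ₂) (hγ : γ₂ ≤ γ₁) (x g : E) :
    F (x + trishStep γ₁ γ₂ α g) ≤ F x + (L * α ^ 2 * γ₁ ^ 2 - α * γ₂) * ⟪F' x, g⟫
        + (α * (γ₁ - γ₂) * γ₂ / (2 * (γ₁ + γ₂)) - L * α ^ 2 * γ₁ ^ 2 / 2) * ‖F' x‖ ^ 2
        + α * ((γ₁ ^ 2 - γ₂ ^ 2) / (2 * γ₂) + 1 / 2 * α * γ₁ ^ 2 * L) * ‖F' x - g‖ ^ 2 := by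
  obtain ⟨c, hc, hstep⟩ := exists_trishStep_eq_smul hγ₂ hγ α g
  calc F (x + trishStep γ₁ γ₂ α g)
      ≤ F x + -(c * α) * ⟪F' x, g⟫ + L / 2 * ((c * α) ^ 2 * ‖g‖ ^ 2) := by
        simpa only [hstep, real_inner_smul_right, norm_smul, Real.norm_eq_abs, mul_pow, sq_abs,
          neg_sq] using hdesc x ((-(c * α)) • g)
    _ ≤ _ := by linarith [neg_mul_inner_add_sq_le hL hα hγ₂ hc (F' x) g]

end Trish

namespace MeasureTheory

variable {Ω E : Type*} {m m0 : MeasurableSpace Ω} {μ : Measure Ω}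
  [NormedAddCommGroup E] [InnerProductSpace ℝ E]

theorem MemLp.integrable_inner {f g : Ω → E} (hf : MemLp f 2 μ) (hg : MemLp g 2 μ) :
    Integrable (fun ω => ⟪f ω, g ω⟫) μ :=
  (L2.integrable_inner (hf.toLp f) (hg.toLp g)).congr <| by
    filter_upwards [hf.coeFn_toLp, hg.coeFn_toLp] with ω hfω hgω
    rw [hfω, hgω]

theorem memLp_two_of_condExp_ae_eq (hm : m ≤ m0) {g h : Ω → E} (hcond : μ[g|m] =ᵐ[μ] h)
    (hg : Integrable g μ) (hh : Integrable (fun ω => ‖h ω‖ ^ 2) μ)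
    (hgh : Integrable (fun ω => ‖h ω - g ω‖ ^ 2) μ) : MemLp h 2 μ ∧ MemLp g 2 μ := by
  have hh_meas : AEStronglyMeasurable h μ :=
    ((stronglyMeasurable_condExp.mono hm).aestronglyMeasurable).congr hcond
  have hh2 : MemLp h 2 μ := (memLp_two_iff_integrable_sq_norm hh_meas).2 hh
  have hgh2 : MemLp (h - g) 2 μ :=
    (memLp_two_iff_integrable_sq_norm (hh_meas.sub hg.aestronglyMeasurable)).2 hgh
  exact ⟨hh2, by simpa using hh2.sub hgh2⟩

variable [CompleteSpace E]

theorem integral_inner_eq_integral_norm_sq_of_condExp_ae_eq [IsFiniteMeasure μ] (hm : m ≤ m0)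
    {g h : Ω → E} (hg : MemLp g 2 μ) (hh : MemLp h 2 μ) (hcond : μ[g|m] =ᵐ[μ] h) :
    ∫ ω, ⟪h ω, g ω⟫ ∂μ = ∫ ω, ‖h ω‖ ^ 2 ∂μ := by
  have hmeas : AEStronglyMeasurable[m] (hh.toLp h) μ :=
    ⟨μ[g|m], stronglyMeasurable_condExp, hh.coeFn_toLp.trans hcond.symm⟩
  -- `μ[·|m]` is the orthogonal projection of `L²` onto the `m`-measurable functions, like `h`.
  have hproj := inner_condExpL2_eq_inner_fun (𝕜 := ℝ) hm (hg.toLp g) (hh.toLp h) hmeas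
  rw [L2.inner_def, L2.inner_def] at hproj
  calc ∫ ω, ⟪h ω, g ω⟫ ∂μ = ∫ ω, ⟪(hg.toLp g : Ω → E) ω, (hh.toLp h : Ω → E) ω⟫ ∂μ := by
        refine integral_congr_ae ?_
        filter_upwards [hg.coeFn_toLp, hh.coeFn_toLp] with ω hgω hhω
        rw [hgω, hhω, real_inner_comm]
    _ = ∫ ω, ⟪(condExpL2 E ℝ hm (hg.toLp g) : Ω → E) ω, (hh.toLp h : Ω → E) ω⟫ ∂μ := hproj.symm
    _ = ∫ ω, ‖h ω‖ ^ 2 ∂μ := by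
        refine integral_congr_ae ?_
        filter_upwards [hg.condExpL2_ae_eq_condExp (𝕜 := ℝ) hm, hcond, hh.coeFn_toLp]
          with ω hcω hgω hhω
        rw [hcω, hgω, hhω, real_inner_self_eq_norm_sq]

theorem integral_le_of_ae_condExp_le [IsProbabilityMeasure μ] (hm : m ≤ m0) {f : Ω → ℝ} {M : ℝ}
    (hf : ∀ᵐ ω ∂μ, μ[f|m] ω ≤ M) : ∫ ω, f ω ∂μ ≤ M := by
  rw [← integral_condExp hm]
  simpa using integral_mono_ae integrable_condExp (integrable_const M) hf

theorem integral_apply_add_trishStep_le_of_memLp [IsFiniteMeasure μ] (hm : m ≤ m0)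
    {F : E → ℝ} {F' : E → E} {L α γ₁ γ₂ : ℝ}
    (hdesc : ∀ x v, F (x + v) ≤ F x + ⟪F' x, v⟫ + L / 2 * ‖v‖ ^ 2)
    (hL : 0 ≤ L) (hα : 0 ≤ α) (hγ₂ : 0 < γ₂) (hγ : γ₂ ≤ γ₁)
    {X X' G : Ω → E} (hX' : ∀ ω, X' ω = X ω + trishStep γ₁ γ₂ α (G ω))
    (hG : MemLp G 2 μ) (hH : MemLp (fun ω => F' (X ω)) 2 μ)
    (hFX : Integrable (fun ω => F (X ω)) μ) (hFX' : Integrable (fun ω => F (X' ω)) μ)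
    (hcond : μ[G|m] =ᵐ[μ] fun ω => F' (X ω)) :
    ∫ ω, F (X' ω) ∂μ ≤ ∫ ω, F (X ω) ∂μ
      + (L * α ^ 2 * γ₁ ^ 2 / 2 - α * γ₂ + α * (γ₁ - γ₂) * γ₂ / (2 * (γ₁ + γ₂)))
          * ∫ ω, ‖F' (X ω)‖ ^ 2 ∂μ
      + α * ((γ₁ ^ 2 - γ₂ ^ 2) / (2 * γ₂) + 1 / 2 * α * γ₁ ^ 2 * L)
          * ∫ ω, ‖F' (X ω) - G ω‖ ^ 2 ∂μ := by
  set a := L * α ^ 2 * γ₁ ^ 2 - α * γ₂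
  set b := α * (γ₁ - γ₂) * γ₂ / (2 * (γ₁ + γ₂)) - L * α ^ 2 * γ₁ ^ 2 / 2
  set d := α * ((γ₁ ^ 2 - γ₂ ^ 2) / (2 * γ₂) + 1 / 2 * α * γ₁ ^ 2 * L)
  have hinner : Integrable (fun ω => a * ⟪F' (X ω), G ω⟫) μ :=
    (hH.integrable_inner hG).const_mul a
  have hnorm : Integrable (fun ω => ‖F' (X ω)‖ ^ 2) μ := hH.integrable_norm_pow two_ne_zero
  have herr : Integrable (fun ω => ‖F' (X ω) - G ω‖ ^ 2) μ :=
    (hH.sub hG).integrable_norm_pow two_ne_zero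
  have h1 : Integrable (fun ω => F (X ω) + a * ⟪F' (X ω), G ω⟫) μ := hFX.add hinner
  have h2 : Integrable (fun ω => F (X ω) + a * ⟪F' (X ω), G ω⟫ + b * ‖F' (X ω)‖ ^ 2) μ :=
    h1.add (hnorm.const_mul b)
  have h3 : Integrable (fun ω => F (X ω) + a * ⟪F' (X ω), G ω⟫ + b * ‖F' (X ω)‖ ^ 2
      + d * ‖F' (X ω) - G ω‖ ^ 2) μ := h2.add (herr.const_mul d)
  have hpoint := integral_mono hFX' h3 fun ω => by
    simpa only [hX'] using apply_add_trishStep_le hdesc hL hα hγ₂ hγ (X ω) (G ω)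
  rw [integral_add h2 (herr.const_mul d), integral_add h1 (hnorm.const_mul b),
    integral_add hFX hinner, integral_const_mul, integral_const_mul, integral_const_mul,
    integral_inner_eq_integral_norm_sq_of_condExp_ae_eq hm hG hH hcond] at hpoint
  linear_combination hpoint

theorem integral_apply_add_trishStep_le [IsProbabilityMeasure μ] (hm : m ≤ m0)
    {F : E → ℝ} {F' : E → E} {L α γ₁ γ₂ M : ℝ}
    (hdesc : ∀ x v, F (x + v) ≤ F x + ⟪F' x, v⟫ + L / 2 * ‖v‖ ^ 2)
    (hL : 0 ≤ L) (hα : 0 < α) (hγ₂ : 0 < γ₂) (hγ : γ₂ ≤ γ₁) (hαL : α * γ₁ ^ 2 * L ≤ γ₂ / 2)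
    {X X' G : Ω → E} (hX' : ∀ ω, X' ω = X ω + trishStep γ₁ γ₂ α (G ω))
    (hG : Integrable G μ) (hH : Integrable (fun ω => ‖F' (X ω)‖ ^ 2) μ)
    (hHG : Integrable (fun ω => ‖F' (X ω) - G ω‖ ^ 2) μ)
    (hFX : Integrable (fun ω => F (X ω)) μ) (hFX' : Integrable (fun ω => F (X' ω)) μ)
    (hcond : μ[G|m] =ᵐ[μ] fun ω => F' (X ω))
    (hvar : ∀ᵐ ω ∂μ, μ[fun ω' => ‖F' (X ω') - G ω'‖ ^ 2|m] ω ≤ M) :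
    ∫ ω, F (X' ω) ∂μ ≤
      ∫ ω, F (X ω) ∂μ - α * γ₂ / 4 * ∫ ω, ‖F' (X ω)‖ ^ 2 ∂μ
        + α * ((γ₁ ^ 2 - γ₂ ^ 2) / (2 * γ₂) + 1 / 2 * α * γ₁ ^ 2 * L) * M := by
  obtain ⟨hH2, hG2⟩ := memLp_two_of_condExp_ae_eq hm hcond hG hH hHG
  have hstep := integral_apply_add_trishStep_le_of_memLp hm hdesc hL hα.le hγ₂ hγ hX' hG2 hH2
    hFX hFX' hcond
  have hgrad_coeff : L * α ^ 2 * γ₁ ^ 2 / 2 - α * γ₂ + α * (γ₁ - γ₂) * γ₂ / (2 * (γ₁ + γ₂))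
      ≤ -(α * γ₂ / 4) := by
    have hquad : L * α ^ 2 * γ₁ ^ 2 / 2 ≤ α * γ₂ / 4 := by
      nlinarith [mul_le_mul_of_nonneg_left hαL hα.le]
    have hcross : α * (γ₁ - γ₂) * γ₂ / (2 * (γ₁ + γ₂)) ≤ α * γ₂ / 2 := by
      rw [div_le_iff₀ (by linarith)]
      nlinarith [mul_pos hα hγ₂]
    linarith
  have hnoise_coeff : 0 ≤ α * ((γ₁ ^ 2 - γ₂ ^ 2) / (2 * γ₂) + 1 / 2 * α * γ₁ ^ 2 * L) := by
    have : 0 ≤ (γ₁ ^ 2 - γ₂ ^ 2) / (2 * γ₂) := div_nonneg (by nlinarith) (by positivity)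
    positivity
  have hgrad_nonneg : 0 ≤ ∫ ω, ‖F' (X ω)‖ ^ 2 ∂μ := integral_nonneg fun ω => by positivity
  linear_combination hstep + mul_le_mul_of_nonneg_right hgrad_coeff hgrad_nonneg
    + mul_le_mul_of_nonneg_left (integral_le_of_ae_condExp_le hm hvar) hnoise_coeff

end MeasureTheory

theorem mul_sum_Icc_le_of_le_sub_add {u v : ℕ → ℝ} {c D : ℝ}
    (h : ∀ k, u (k + 1) ≤ u k - c * v k + D) (K : ℕ) :
    c * ∑ k ∈ Finset.Icc 1 K, v k ≤ u 1 - u (K + 1) + K * D := by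
  induction K with
  | zero => simp
  | succ K ih =>
    rw [Finset.sum_Icc_succ_top (Nat.le_add_left 1 K), mul_add]
    push_cast
    linarith [h (K + 1)]

theorem stmt_12_general {n : ℕ} (F : EuclideanSpace ℝ (Fin n) → ℝ)
    (F' : EuclideanSpace ℝ (Fin n) → EuclideanSpace ℝ (Fin n))
    (L Fstar : ℝ) (hL : 0 < L)
    (hgrad : ∀ y, HasGradientAt F (F' y) y)
    (hlip : LipschitzWith (Real.toNNReal L) F')
    (hbdd : ∀ y, Fstar ≤ F y)
    (α γ₁ γ₂ β Mg : ℝ) (hα : 0 < α) (hγ₂ : 0 < γ₂) (hγ : γ₂ < γ₁)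
    (hαlt : α < γ₂ / (2 * γ₁ ^ 2 * L))
    (hβ : β = (γ₁ ^ 2 - γ₂ ^ 2) / (2 * γ₂) + (1 / 2) * α * γ₁ ^ 2 * L)
    {Ω : Type*} {m0 : MeasurableSpace Ω} (μ : Measure Ω) [IsProbabilityMeasure μ]
    (ℱ : Filtration ℕ m0)
    (x g : ℕ → Ω → EuclideanSpace ℝ (Fin n))
    (hstep : ∀ k ω, x (k + 1) ω = x k ω +
      (if ‖g k ω‖ < 1 / γ₁ then (-(γ₁ * α)) • g k ω
       else if ‖g k ω‖ ≤ 1 / γ₂ then (-(α / ‖g k ω‖)) • g k ω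
       else (-(γ₂ * α)) • g k ω))
    (hintg : ∀ k, Integrable (g k) μ)
    (hintF : ∀ k, Integrable (fun ω => F (x k ω)) μ)
    (hint2 : ∀ k, Integrable (fun ω => ‖F' (x k ω) - g k ω‖ ^ 2) μ)
    (hintgrad : ∀ k, Integrable (fun ω => ‖F' (x k ω)‖ ^ 2) μ)
    (hunbiased : ∀ k, μ[g k | ℱ k] =ᵐ[μ] fun ω => F' (x k ω))
    (hvar : ∀ k, ∀ᵐ ω ∂μ, (μ[fun ω' => ‖F' (x k ω') - g k ω'‖ ^ 2 | ℱ k]) ω < Mg) :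
    ∀ K : ℕ, 1 ≤ K →
      (∫ ω, (1 / (K : ℝ)) * ∑ k ∈ Finset.Icc 1 K, ‖F' (x k ω)‖ ^ 2 ∂μ) ≤
        4 * ((∫ ω, F (x 1 ω) ∂μ) - Fstar) / ((K : ℝ) * α * γ₂)
          + 4 * β * Mg / γ₂ := by
  intro K hK
  subst hβ
  have hαL : α * γ₁ ^ 2 * L ≤ γ₂ / 2 := by
    have hγ₁ : 0 < γ₁ := hγ₂.trans hγ
    rw [lt_div_iff₀ (by positivity)] at hαlt
    nlinarith
  have hdesc : ∀ y v, F (y + v) ≤ F y + ⟪F' y, v⟫ + L / 2 * ‖v‖ ^ 2 := by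
    simpa only [Real.coe_toNNReal L hL.le] using apply_add_le_of_lipschitzWith_gradient hgrad hlip
  have hdecrease : ∀ k, ∫ ω, F (x (k + 1) ω) ∂μ ≤ ∫ ω, F (x k ω) ∂μ
      - α * γ₂ / 4 * ∫ ω, ‖F' (x k ω)‖ ^ 2 ∂μ
      + α * ((γ₁ ^ 2 - γ₂ ^ 2) / (2 * γ₂) + 1 / 2 * α * γ₁ ^ 2 * L) * Mg := fun k =>
    integral_apply_add_trishStep_le (ℱ.le k) hdesc hL.le hα hγ₂ hγ.le hαL (hstep k) (hintg k)
      (hintgrad k) (hint2 k) (hintF k) (hintF (k + 1)) (hunbiased k)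
      ((hvar k).mono fun ω hω => hω.le)
  have htel := mul_sum_Icc_le_of_le_sub_add (u := fun k => ∫ ω, F (x k ω) ∂μ)
    (v := fun k => ∫ ω, ‖F' (x k ω)‖ ^ 2 ∂μ) hdecrease K
  have hFstar : Fstar ≤ ∫ ω, F (x (K + 1) ω) ∂μ := by
    simpa using integral_mono (integrable_const Fstar) (hintF (K + 1)) fun ω => hbdd _
  have hKpos : (0 : ℝ) < K := by exact_mod_cast hK
  rw [integral_const_mul, integral_finsetSum _ fun k _ => hintgrad k,
    show ∀ S : ℝ, 1 / (K : ℝ) * S = 4 / (K * α * γ₂) * (α * γ₂ / 4 * S) from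
      fun S => by field_simp]
  calc _ ≤ 4 / (K * α * γ₂) * ((∫ ω, F (x 1 ω) ∂μ) - Fstar
        + K * (α * ((γ₁ ^ 2 - γ₂ ^ 2) / (2 * γ₂) + 1 / 2 * α * γ₁ ^ 2 * L) * Mg)) := by
        gcongr
        linarith
    _ = _ := by field_simp

theorem stmt_12 {n : ℕ} (F : EuclideanSpace ℝ (Fin n) → ℝ)
    (F' : EuclideanSpace ℝ (Fin n) → EuclideanSpace ℝ (Fin n))
    (L Fstar : ℝ) (hL : 0 < L)
    (hgrad : ∀ y, HasGradientAt F (F' y) y)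
    (hlip : LipschitzWith (Real.toNNReal L) F')
    (hbdd : ∀ y, Fstar ≤ F y)
    (α γ₁ γ₂ β Mg : ℝ) (hα : 0 < α) (hγ₂ : 0 < γ₂) (hγ : γ₂ < γ₁) (hMg : 0 < Mg)
    (hαlt : α < γ₂ / (2 * γ₁ ^ 2 * L))
    (hβ : β = (γ₁ ^ 2 - γ₂ ^ 2) / (2 * γ₂) + (1 / 2) * α * γ₁ ^ 2 * L)
    {Ω : Type*} {m0 : MeasurableSpace Ω} (μ : Measure Ω) [IsProbabilityMeasure μ]
    (ℱ : Filtration ℕ m0)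
    (x g : ℕ → Ω → EuclideanSpace ℝ (Fin n))
    (hadapted : Adapted ℱ x)
    (hstep : ∀ k ω, x (k + 1) ω = x k ω +
      (if ‖g k ω‖ < 1 / γ₁ then (-(γ₁ * α)) • g k ω
       else if ‖g k ω‖ ≤ 1 / γ₂ then (-(α / ‖g k ω‖)) • g k ω
       else (-(γ₂ * α)) • g k ω))
    (hintg : ∀ k, Integrable (g k) μ)
    (hintF : ∀ k, Integrable (fun ω => F (x k ω)) μ)
    (hint2 : ∀ k, Integrable (fun ω => ‖F' (x k ω) - g k ω‖ ^ 2) μ)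
    (hintgrad : ∀ k, Integrable (fun ω => ‖F' (x k ω)‖ ^ 2) μ)
    (hunbiased : ∀ k, μ[g k | ℱ k] =ᵐ[μ] fun ω => F' (x k ω))
    (hvar : ∀ k, ∀ᵐ ω ∂μ, (μ[fun ω' => ‖F' (x k ω') - g k ω'‖ ^ 2 | ℱ k]) ω < Mg) :
    ∀ K : ℕ, 1 ≤ K →
      (∫ ω, (1 / (K : ℝ)) * ∑ k ∈ Finset.Icc 1 K, ‖F' (x k ω)‖ ^ 2 ∂μ) ≤
        4 * ((∫ ω, F (x 1 ω) ∂μ) - Fstar) / ((K : ℝ) * α * γ₂)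
          + 4 * β * Mg / γ₂ :=
  stmt_12_general F F' L Fstar hL hgrad hlip hbdd α γ₁ γ₂ β Mg hα hγ₂ hγ hαlt hβ μ ℱ x g hstep hintg
    hintF hint2 hintgrad hunbiased hvar
end
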